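/- arXiv:math/0407016 — 6 statements merged into one kernel-verified Lean document; each statement's English description precedes it below -/
import Mathlib

section
/- Let q ≥ 1 and n ≥ 1. The number of Lyndon words of length n over a totally ordered alphabet with q letters equals (1/n)·Σ_{d | n} μ(d)·q^{n/d}, where μ is the Möbius function and the sum is over the positive divisors d of n. -/
/-!
Let `ρ w = w ∘ finRotate n` rotate words of length `n` by one letter, so `ρ^[n] = id`. A word
fixed by `ρ^[d]` with `d ∣ n` is determined by its first `d` letters, hence summing, over
`e ∣ d`, the number of words of least period `e` gives `q ^ d`, and Möbius inversion yields
`∑ d ∣ n, μ d q^(n/d)` primitive words (least period `n`). A word is Lyndon iff it is strictly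
smaller than all its nontrivial rotations, so Lyndon words are primitive and every rotation
class of primitive words, which has exactly `n` elements, contains exactly one of them: its
least element. So there are `n` times as many primitive words as Lyndon words.
-/

open scoped Classical

/-- A Lyndon word: strictly smaller, in lexicographic order, than each of its
proper (nonempty) suffixes. -/
def IsLyndon {α : Type*} [LinearOrder α] (w : List α) : Prop :=
  ∀ i, 0 < i → i < w.length → List.Lex (· < ·) w (w.drop i)

/-- The finite set of Lyndon words of length `n` over a totally ordered alphabet
with `q` letters, encoded as functions `Fin n → Fin q`. -/
noncomputable def lyndonWords (q n : ℕ) : Finset (Fin n → Fin q) :=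
  Finset.univ.filter fun w => IsLyndon (List.ofFn w)

open Function Finset

namespace List

section Lex

variable {α : Type*} [LT α]

theorem lt_or_isPrefix_of_lt_append {m s p : List α} (h : m < s ++ p) : m < s ∨ s <+: m := by
  induction s generalizing m with
  | nil => exact .inr nil_prefix
  | cons b s ih =>
    rcases m with _ | ⟨a, m⟩
    · exact .inl .nil
    · rcases h with _ | ⟨h⟩ | ⟨h⟩
      · exact .inl (.rel ‹_›)
      · exact (ih h).imp .cons (prefix_cons_inj _).2

theorem lt_of_append_lt_append_left [Std.Irrefl (α := α) (· < ·)] {s t p : List α}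
    (h : s ++ t < s ++ p) : t < p := by
  induction s with
  | nil => exact h
  | cons a s ih => exact ih (cons_lt_cons_self.1 h)

theorem append_lt_append_of_lt_of_length_eq {s t : List α} (h : s < t)
    (hl : s.length = t.length) (x y : List α) : s ++ x < t ++ y := by
  induction h with
  | nil => simp at hl
  | cons _ ih => exact .cons (ih (by simpa using hl))
  | rel h => exact .rel h

end Lex

section Rotate

variable {α : Type*}

theorem rotate_mul_eq_self {l : List α} {d : ℕ} (h : l.rotate d = l) (j : ℕ) :
    l.rotate (j * d) = l := by
  induction j with
  | zero => simp
  | succ j ih => rw [Nat.succ_mul, ← rotate_rotate, ih, h]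

theorem rotate_eq_self_iff_getElem_mod {l : List α} {d : ℕ} (hd : d ∣ l.length) :
    l.rotate d = l ↔
      ∀ i (hi : i < l.length), l[i] = l[i % d]'((Nat.mod_le i d).trans_lt hi) := by
  refine ⟨fun h i hi => ?_, fun h => ext_getElem (length_rotate ..) fun k _ hk => ?_⟩
  · calc l[i] = l[(i % d + i / d * d) % l.length]'(Nat.mod_lt _ (by omega)) := by
          simp only [Nat.mod_add_div', Nat.mod_eq_of_lt hi]
      _ = (l.rotate (i / d * d))[i % d]'(by simpa using (Nat.mod_le i d).trans_lt hi) :=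
          (getElem_rotate ..).symm
      _ = l[i % d]'((Nat.mod_le i d).trans_lt hi) := getElem_of_eq (rotate_mul_eq_self h _) _
  · rw [getElem_rotate, h, h k hk]
    simp only [Nat.mod_mod_of_dvd _ hd, Nat.add_mod_right]

theorem ofFn_comp_finRotate {n : ℕ} (w : Fin n → α) :
    ofFn (w ∘ finRotate n) = (ofFn w).rotate 1 := by
  refine ext_getElem (by simp) fun k _ _ => ?_
  simp only [List.getElem_ofFn, getElem_rotate, comp_apply, length_ofFn]
  congr 1
  ext
  rw [finRotate_apply, Fin.val_add, Fin.val_one', Nat.add_mod_mod]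

end Rotate

end List

open List in
theorem isLyndon_iff_lt_rotate {α : Type*} [LinearOrder α] {w : List α} :
    IsLyndon w ↔ ∀ k, 0 < k → k < w.length → w < w.rotate k := by
  refine ⟨fun h k hk hkw => ?_, fun h k hk hkw => ?_⟩
  · rw [rotate_eq_drop_append_take hkw.le]
    exact Lex.append_right _ _ (h k hk hkw)
  have hrot := h k hk hkw
  rw [rotate_eq_drop_append_take hkw.le] at hrot
  refine (lt_or_isPrefix_of_lt_append hrot).resolve_right ?_
  -- If `w = w.drop k ++ t`, then `t < w.take k` and the rotation `t ++ w.drop k` is below `w`.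
  rintro ⟨t, ht⟩
  have hlen : t.length = k := by
    have := congrArg length ht
    simp only [length_append, length_drop] at this
    omega
  have hrotate : w.rotate (w.length - k) = t ++ w.drop k := by
    calc w.rotate (w.length - k) = (w.drop k ++ t).rotate (w.drop k).length := by
          rw [ht, length_drop]
      _ = t ++ w.drop k := rotate_append_length_eq _ _
  have hlt : t ++ w.drop k < w := by
    simpa using append_lt_append_of_lt_of_length_eq
      (lt_of_append_lt_append_left (ht.trans_lt hrot)) (by rw [length_take]; omega) (w.drop k) (w.drop k)
  exact lt_asymm (hrotate ▸ h (w.length - k) (by omega) (by omega)) hlt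

section OrbitMinimum

variable {X : Type*}

theorem sum_card_minimalPeriod_eq_card_isPeriodicPt [Fintype X] [DecidableEq X] (f : X → X)
    {d : ℕ} (hd : 0 < d) :
    ∑ e ∈ d.divisors, #{x | minimalPeriod f x = e} = #{x | IsPeriodicPt f d x} := by
  rw [card_eq_sum_card_fiberwise (f := minimalPeriod f) (t := d.divisors) fun x hx => ?_]
  · refine sum_congr rfl fun e he => congrArg card ?_
    ext x
    simp only [mem_filter, mem_univ, true_and]
    refine ⟨fun h => ⟨?_, h⟩, And.right⟩
    exact isPeriodicPt_iff_minimalPeriod_dvd.2 (h ▸ Nat.dvd_of_mem_divisors he)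
  · exact Nat.mem_divisors.2 ⟨(mem_filter.1 (mem_coe.1 hx)).2.minimalPeriod_dvd, hd.ne'⟩

variable {β : Type*} [LinearOrder β]

def IsStrictOrbitMin (f : X → X) (g : X → β) (n : ℕ) (x : X) : Prop :=
  ∀ k, 0 < k → k < n → g x < g (f^[k] x)

variable {f : X → X} {g : X → β} {n : ℕ} {x : X}

theorem IsStrictOrbitMin.minimalPeriod_eq (h : IsStrictOrbitMin f g n x) (hn : 0 < n)
    (hx : IsPeriodicPt f n x) : minimalPeriod f x = n := by
  refine (hx.minimalPeriod_le hn).antisymm (not_lt.1 fun hlt => ?_)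
  have := h _ (hx.minimalPeriod_pos hn) hlt
  rw [(isPeriodicPt_minimalPeriod f x).eq] at this
  exact lt_irrefl _ this

theorem IsStrictOrbitMin.not_iterate (h : IsStrictOrbitMin f g n x) (hx : IsPeriodicPt f n x)
    {j : ℕ} (hj : 0 < j) (hjn : j < n) : ¬ IsStrictOrbitMin f g n (f^[j] x) := fun h' => by
  have h₂ := h' (n - j) (by omega) (by omega)
  rw [← iterate_add_apply, Nat.sub_add_cancel hjn.le, hx.eq] at h₂
  exact lt_asymm (h j hj hjn) h₂

theorem exists_iterate_isStrictOrbitMin (hg : Injective g) {y : X} (hn : 0 < n)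
    (hy : minimalPeriod f y = n) : ∃ k < n, IsStrictOrbitMin f g n (f^[k] y) := by
  have hper : IsPeriodicPt f n y := hy ▸ isPeriodicPt_minimalPeriod f y
  obtain ⟨k, hk, hmin⟩ :=
    (range n).exists_min_image (fun k => g (f^[k] y)) ⟨0, mem_range.2 hn⟩
  refine ⟨k, mem_range.1 hk, fun j hj hjn => lt_of_le_of_ne ?_ (hg.ne fun heq => ?_)⟩
  · rw [← iterate_add_apply, ← hper.iterate_mod_apply (j + k)]
    exact hmin _ (mem_range.2 (Nat.mod_lt _ hn))
  · refine not_isPeriodicPt_of_pos_of_lt_minimalPeriod hj.ne' ?_ heq.symm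
    rwa [minimalPeriod_apply_iterate (mk_mem_periodicPts hn hper), hy]

theorem card_minimalPeriod_eq_mul_card_isStrictOrbitMin [Fintype X] (hg : Injective g)
    (hn : 0 < n) (hf : ∀ x, IsPeriodicPt f n x) :
    #{x | minimalPeriod f x = n} = n * #{x | IsStrictOrbitMin f g n x} := by
  have hinj : Injective f := LeftInverse.injective (g := f^[n - 1]) fun x => by
    rw [← iterate_succ_apply, Nat.succ_eq_add_one, Nat.sub_add_cancel hn, (hf x).eq]
  calc #{x | minimalPeriod f x = n}
      = #((univ.filter (IsStrictOrbitMin f g n)) ×ˢ range n) :=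
        (card_bij (fun p _ => f^[p.2] p.1) ?_ ?_ ?_).symm
    _ = n * #{x | IsStrictOrbitMin f g n x} := by rw [card_product, card_range, mul_comm]
  · rintro ⟨x, k⟩ hxk
    simp only [mem_product, mem_filter, mem_univ, true_and] at hxk ⊢
    rw [minimalPeriod_apply_iterate (mk_mem_periodicPts hn (hf x)),
      hxk.1.minimalPeriod_eq hn (hf x)]
  · rintro ⟨x, k⟩ hxk ⟨y, l⟩ hyl h
    simp only [mem_product, mem_filter, mem_univ, true_and, mem_range] at hxk hyl h
    wlog hkl : k ≤ l generalizing x y k l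
    · exact (this y l x k h.symm hyl hxk (by omega)).symm
    have hx : x = f^[l - k] y :=
      hinj.iterate k (by rw [← iterate_add_apply, Nat.add_sub_cancel' hkl]; exact h)
    obtain rfl : l = k := by
      by_contra hne
      exact hyl.1.not_iterate (hf y) (by omega) (by omega) (hx ▸ hxk.1)
    rw [hx, Nat.sub_self, iterate_zero_apply]
  · intro y hy
    simp only [mem_filter, mem_univ, true_and] at hy
    obtain ⟨k, hk, hmin⟩ := exists_iterate_isStrictOrbitMin hg hn hy
    refine ⟨(f^[k] y, (n - k) % n), ?_, ?_⟩
    · simp [hmin, Nat.mod_lt _ hn]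
    · dsimp only
      rw [(hf _).iterate_mod_apply, ← iterate_add_apply, Nat.sub_add_cancel hk.le, (hf y).eq]

end OrbitMinimum

section Words

variable {α : Type*} {n : ℕ}

theorem ofFn_iterate_comp_finRotate (w : Fin n → α) (k : ℕ) :
    List.ofFn ((· ∘ finRotate n)^[k] w) = (List.ofFn w).rotate k := by
  induction k with
  | zero => simp
  | succ k ih => rw [iterate_succ_apply', List.ofFn_comp_finRotate, ih, List.rotate_rotate]

theorem isPeriodicPt_comp_finRotate_iff {d : ℕ} (hd : d ∣ n) (w : Fin n → α) :
    IsPeriodicPt (· ∘ finRotate n) d w ↔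
      ∀ i : Fin n, w i = w ⟨i % d, (Nat.mod_le _ _).trans_lt i.2⟩ := by
  rw [IsPeriodicPt, IsFixedPt, ← List.ofFn_injective.eq_iff, ofFn_iterate_comp_finRotate,
    List.rotate_eq_self_iff_getElem_mod (by simpa using hd)]
  simp [Fin.forall_iff]

theorem card_isPeriodicPt_comp_finRotate [Fintype α] {d : ℕ} (hn : 0 < n) (hd : d ∣ n) :
    #{w : Fin n → α | IsPeriodicPt (· ∘ finRotate n) d w} = Fintype.card α ^ d := by
  have hd₀ : 0 < d := Nat.pos_of_dvd_of_pos hd hn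
  have hdn : d ≤ n := Nat.le_of_dvd hn hd
  let extend : (Fin d → α) → Fin n → α := fun v i => v ⟨i % d, Nat.mod_lt _ hd₀⟩
  have hextend : Injective extend := fun v v' h => funext fun j => by
    simpa [extend, Nat.mod_eq_of_lt j.2] using congrFun h ⟨j, j.2.trans_le hdn⟩
  have hperiodic : ({w | IsPeriodicPt (· ∘ finRotate n) d w} : Finset (Fin n → α)) =
      univ.image extend := by
    ext w
    simp only [mem_filter, mem_univ, true_and, mem_image, isPeriodicPt_comp_finRotate_iff hd]
    refine ⟨fun h => ⟨fun j => w ⟨j, j.2.trans_le hdn⟩, funext fun i => (h i).symm⟩, ?_⟩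
    rintro ⟨v, rfl⟩ i
    simp [extend]
  rw [hperiodic, card_image_of_injective _ hextend, card_univ, Fintype.card_fun, Fintype.card_fin]

theorem isPeriodicPt_comp_finRotate_self (w : Fin n → α) :
    IsPeriodicPt (· ∘ finRotate n) n w :=
  List.ofFn_injective <| by
    simpa [ofFn_iterate_comp_finRotate] using List.rotate_length (List.ofFn w)

theorem card_minimalPeriod_comp_finRotate [Fintype α] (hn : 0 < n) :
    (#{w : Fin n → α | minimalPeriod (· ∘ finRotate n) w = n} : ℤ) =
      ∑ d ∈ n.divisors, ArithmeticFunction.moebius d * (Fintype.card α : ℤ) ^ (n / d) := by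
  have hsum : ∀ d > 0, d ∈ {d | d ∣ n} →
      ∑ e ∈ d.divisors, (#{w : Fin n → α | minimalPeriod (· ∘ finRotate n) w = e} : ℤ) =
        (Fintype.card α : ℤ) ^ d := fun d hd hdn => by
    rw [← Nat.cast_sum, sum_card_minimalPeriod_eq_card_isPeriodicPt _ hd,
      card_isPeriodicPt_comp_finRotate hn hdn, Nat.cast_pow]
  have hinv := (ArithmeticFunction.sum_eq_iff_sum_smul_moebius_eq_on {d | d ∣ n}
    (fun a b hab hb => hab.trans hb)).1 hsum n hn dvd_rfl
  rw [← hinv, ← Nat.sum_divisorsAntidiagonal (fun a b => ArithmeticFunction.moebius a * _ ^ b)]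
  simp only [smul_eq_mul]

theorem isLyndon_ofFn_iff [LinearOrder α] (w : Fin n → α) :
    IsLyndon (List.ofFn w) ↔ IsStrictOrbitMin (· ∘ finRotate n) List.ofFn n w := by
  simp only [isLyndon_iff_lt_rotate, IsStrictOrbitMin, ofFn_iterate_comp_finRotate,
    List.length_ofFn]

end Words

theorem stmt_5_general (q n : ℕ) (hn : 1 ≤ n) :
    ((lyndonWords q n).card : ℚ)
      = (1 / (n : ℚ)) *
          ∑ d ∈ n.divisors, ((ArithmeticFunction.moebius d : ℤ) : ℚ) * (q : ℚ) ^ (n / d) := by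
  have hlyndon :
      lyndonWords q n = univ.filter (IsStrictOrbitMin (· ∘ finRotate n) List.ofFn n) :=
    filter_congr fun w _ => isLyndon_ofFn_iff w
  have hcount := card_minimalPeriod_comp_finRotate (α := Fin q) hn
  rw [card_minimalPeriod_eq_mul_card_isStrictOrbitMin List.ofFn_injective hn
    isPeriodicPt_comp_finRotate_self, ← hlyndon, Fintype.card_fin] at hcount
  rw [one_div, eq_inv_mul_iff_mul_eq₀ (by positivity)]
  exact_mod_cast hcount

theorem stmt_5 (q n : ℕ) (hq : 1 ≤ q) (hn : 1 ≤ n) :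
    ((lyndonWords q n).card : ℚ)
      = (1 / (n : ℚ)) *
          ∑ d ∈ n.divisors, ((ArithmeticFunction.moebius d : ℤ) : ℚ) * (q : ℚ) ^ (n / d) :=
  stmt_5_general q n hn
end

section
/- Let q ≥ 2. There exists a constant C > 0 such that for every n ≥ 1 and every set A of Lyndon words of length n over an alphabet with q letters, |P̃_n(A) − P_n(ρ^{−1}(A))| ≤ C·q^{−n/2}, where P̃_n is the uniform probability on Lyndon words of length n, P_n is the uniform probability on all words of length n, and ρ^{−1}(A) is the set of primitive words whose associated Lyndon word lies in A. -/
open scoped Classical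

/-- A word is primitive if the only cyclic shift `τ^k w`, `0 ≤ k < n`, fixing it
is the trivial one, `k = 0`. -/
def IsPrimitive {α : Type*} (w : List α) : Prop :=
  ∀ k < w.length, w.rotate k = w → k = 0

/-- For a set `A` of words of length `n`, `rhoPreimage A` is the set of primitive
words `w` whose associated Lyndon word `ρ(w)` (the unique Lyndon word in the
cyclic-shift orbit of `w`) lies in `A`. -/
noncomputable def rhoPreimage {q n : ℕ} (A : Finset (Fin n → Fin q)) :
    Finset (Fin n → Fin q) :=
  Finset.univ.filter fun w => IsPrimitive (List.ofFn w) ∧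
    ∃ v ∈ A, ∃ k < n, (List.ofFn w).rotate k = List.ofFn v

/-!
Every primitive word is a rotation of exactly one Lyndon word, namely its least rotation, and a
Lyndon word of length `n` has `n` distinct rotations. Hence `|ρ⁻¹(A)| = n |A|` and
`q ^ n = n L + N`, where `L` counts the Lyndon words and `N` the non-primitive words of length `n`,
so the discrepancy equals `|A| N / (L q ^ n) ≤ N / q ^ n`. A non-primitive word is fixed by a
rotation by some `g ≤ n / 2`, hence determined by its first `g` letters, so
`N ≤ ∑_{1 ≤ g ≤ n/2} q ^ g < q ^ (n / 2 + 1)`.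
-/

open Function List
open scoped Finset

namespace List

variable {α : Type*}

section Lex

variable {r : α → α → Prop}

theorem Lex.lex_or_isPrefix_of_lex_append {x y : List α} (z : List α) (h : Lex r x (y ++ z))
    (hl : y.length ≤ x.length) : Lex r x y ∨ y <+: x := by
  induction y generalizing x with
  | nil => exact Or.inr nil_prefix
  | cons b y ih =>
    match x, h with
    | _ :: _, .rel hab => exact Or.inl (.rel hab)
    | _ :: _, .cons h =>
      rcases ih h (by simpa using hl) with h | h
      · exact Or.inl (.cons h)
      · exact Or.inr ((prefix_cons_inj b).2 h)

theorem Lex.append_of_length_le {t p : List α} (a b : List α) (h : Lex r t p)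
    (hl : p.length ≤ t.length) : Lex r (t ++ a) (p ++ b) := by
  induction p generalizing t with
  | nil => cases h
  | cons c p ih =>
    match t, h with
    | _ :: _, .rel hab => exact .rel hab
    | _ :: _, .cons h => exact .cons (ih h (by simpa using hl))

theorem Lex.of_append_left [Std.Irrefl r] (s : List α) {t p : List α}
    (h : Lex r (s ++ t) (s ++ p)) : Lex r t p := by
  induction s with
  | nil => exact h
  | cons a s ih =>
    cases h with
    | cons h => exact ih h
    | rel h => exact absurd h (Std.Irrefl.irrefl a)

end Lex

theorem iterate_rotate_one (l : List α) (k : ℕ) : (rotate · 1)^[k] l = l.rotate k := by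
  induction k with
  | zero => simp
  | succ k ih => rw [iterate_succ_apply', ih, rotate_rotate]

theorem isPeriodicPt_rotate_one_iff {l : List α} {k : ℕ} :
    IsPeriodicPt (rotate · 1) k l ↔ l.rotate k = l := by
  rw [IsPeriodicPt, IsFixedPt, iterate_rotate_one]

theorem isPeriodicPt_rotate_one_length (l : List α) : IsPeriodicPt (rotate · 1) l.length l :=
  isPeriodicPt_rotate_one_iff.2 l.rotate_length

theorem exists_rotate_rotate_eq {l : List α} (hl : l ≠ []) (k : ℕ) :
    ∃ k' < l.length, (l.rotate k).rotate k' = l := by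
  have hpos : 0 < l.length := length_pos_iff.2 hl
  refine ⟨(l.length - k % l.length) % l.length, Nat.mod_lt _ hpos, ?_⟩
  rw [rotate_rotate, ← rotate_mod, Nat.add_mod, Nat.mod_mod, Nat.add_mod_mod,
    Nat.add_sub_cancel' (Nat.mod_lt _ hpos).le, Nat.mod_self, rotate_zero]

end List

variable {α : Type*}

theorem isPrimitive_iff_minimalPeriod_eq_length {w : List α} (hw : w ≠ []) :
    IsPrimitive w ↔ minimalPeriod (rotate · 1) w = w.length := by
  have hlen : 0 < w.length := length_pos_iff.2 hw
  have hper := isPeriodicPt_rotate_one_length w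
  constructor
  · intro h
    refine (Nat.le_of_dvd hlen hper.minimalPeriod_dvd).antisymm (not_lt.1 fun hlt => ?_)
    exact (hper.minimalPeriod_pos hlen).ne'
      (h _ hlt (isPeriodicPt_rotate_one_iff.1 (isPeriodicPt_minimalPeriod _ w)))
  · intro h k hk hrot
    have hdvd := (isPeriodicPt_rotate_one_iff.2 hrot).minimalPeriod_dvd
    exact Nat.eq_zero_of_dvd_of_lt (h ▸ hdvd) hk

theorem IsPrimitive.rotate_injOn {w : List α} (hw : IsPrimitive w) {j k : ℕ}
    (hj : j < w.length) (hk : k < w.length) (h : w.rotate j = w.rotate k) : j = k := by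
  have hinj := iterate_injOn_Iio_minimalPeriod (f := (rotate · 1)) (x := w)
  rw [(isPrimitive_iff_minimalPeriod_eq_length (ne_nil_of_length_pos (by omega))).1 hw] at hinj
  exact hinj hj hk (by simpa only [iterate_rotate_one] using h)

theorem IsPrimitive.rotate {w : List α} (hw : IsPrimitive w) (j : ℕ) :
    IsPrimitive (w.rotate j) := by
  rcases eq_or_ne w [] with rfl | hne
  · simpa using hw
  have hper : w ∈ periodicPts (List.rotate · 1) :=
    mk_mem_periodicPts (length_pos_iff.2 hne) (isPeriodicPt_rotate_one_length w)
  rw [isPrimitive_iff_minimalPeriod_eq_length (by simpa using hne), length_rotate,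
    ← iterate_rotate_one, minimalPeriod_apply_iterate hper]
  exact (isPrimitive_iff_minimalPeriod_eq_length hne).1 hw

theorem exists_rotate_eq_self_of_not_isPrimitive {w : List α} (hw : w ≠ [])
    (h : ¬ IsPrimitive w) : ∃ g, 0 < g ∧ g ≤ w.length / 2 ∧ w.rotate g = w := by
  have hlen : 0 < w.length := length_pos_iff.2 hw
  have hper := isPeriodicPt_rotate_one_length w
  rw [isPrimitive_iff_minimalPeriod_eq_length hw] at h
  obtain ⟨m, hm⟩ := hper.minimalPeriod_dvd
  refine ⟨_, hper.minimalPeriod_pos hlen, ?_,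
    isPeriodicPt_rotate_one_iff.1 (isPeriodicPt_minimalPeriod _ w)⟩
  have hm2 : 2 ≤ m := by
    rcases m with _ | _ | m
    · omega
    · exact absurd (by simpa using hm.symm) h
    · omega
  rw [Nat.le_div_iff_mul_le two_pos, hm]
  exact Nat.mul_le_mul_left _ hm2

section Lyndon

variable [LinearOrder α]

theorem IsLyndon.lt_rotate {w : List α} (hw : IsLyndon w) {k : ℕ} (hk0 : 0 < k)
    (hk : k < w.length) : w < w.rotate k := by
  rw [rotate_eq_drop_append_take hk.le]
  exact Lex.append_right _ _ (hw k hk0 hk)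

theorem IsLyndon.isPrimitive {w : List α} (hw : IsLyndon w) : IsPrimitive w := by
  intro k hk hrot
  by_contra hk0
  have h := hw.lt_rotate (Nat.pos_of_ne_zero hk0) hk
  rw [hrot] at h
  exact lt_irrefl w h

theorem IsLyndon.eq_zero_of_rotate_eq {v v' : List α} (hv : IsLyndon v) (hv' : IsLyndon v')
    {k : ℕ} (hk : k < v.length) (h : v.rotate k = v') : k = 0 := by
  by_contra hk0
  have hlen : v'.length = v.length := by rw [← h, length_rotate]
  have hback : v'.rotate (v.length - k) = v := by
    rw [← h, rotate_rotate, Nat.add_sub_cancel' hk.le, rotate_length]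
  have hlt : v < v' := h ▸ hv.lt_rotate (Nat.pos_of_ne_zero hk0) hk
  have hgt : v' < v := hback ▸ hv'.lt_rotate (by omega) (by omega)
  exact lt_asymm hlt hgt

theorem IsLyndon.eq_of_rotate_eq_rotate {v v' : List α} (hv : IsLyndon v) (hv' : IsLyndon v')
    (hlen : v.length = v'.length) {j k : ℕ} (hj : j < v.length) (hk : k < v.length)
    (h : v.rotate j = v'.rotate k) : v = v' ∧ j = k := by
  obtain ⟨k', -, hback⟩ := exists_rotate_rotate_eq (l := v') (ne_nil_of_length_pos (by omega)) k
  have hrot : v.rotate ((j + k') % v.length) = v' := by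
    rw [rotate_mod, ← rotate_rotate, h, hback]
  rw [hv.eq_zero_of_rotate_eq hv' (Nat.mod_lt _ (by omega)) hrot, rotate_zero] at hrot
  subst hrot
  exact ⟨rfl, hv.isPrimitive.rotate_injOn hj hk h⟩

/-- A suffix `s = v.drop i` that is not above `v` must be a prefix of `v`, say `v = s ++ t`, and
then the rotation `t ++ s` lies below `v`. -/
theorem isLyndon_of_lt_rotate {v : List α}
    (h : ∀ i, 0 < i → i < v.length → v < v.rotate i) : IsLyndon v := by
  intro i hi0 hi
  have hlt : v < v.drop i ++ v.take i := rotate_eq_drop_append_take hi.le ▸ h i hi0 hi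
  rcases Lex.lex_or_isPrefix_of_lex_append _ hlt (by simp) with hsuf | ⟨t, hst⟩
  · exact hsuf
  exfalso
  set s := v.drop i
  have hs : s.length = v.length - i := length_drop
  have ht : t.length = i := by
    have := congrArg length hst
    simp only [length_append] at this
    omega
  have htake : t < v.take i := Lex.of_append_left s (hst.symm ▸ hlt)
  have hts : t ++ s < v := by
    have := Lex.append_of_length_le s s htake (by simp [ht])
    rwa [take_append_drop] at this
  have hrot : v < t ++ s := by
    simpa only [← hst, rotate_append_length_eq] using h s.length (by omega) (by omega)
  exact lt_asymm hts hrot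

theorem exists_isLyndon_rotate {w : List α} (hw : IsPrimitive w) (hne : w ≠ []) :
    ∃ k < w.length, IsLyndon (w.rotate k) := by
  have hlen : 0 < w.length := length_pos_iff.2 hne
  obtain ⟨k, hk, hmin⟩ := Finset.exists_min_image (Finset.range w.length) (w.rotate ·)
    ⟨0, Finset.mem_range.2 hlen⟩
  refine ⟨k, Finset.mem_range.1 hk, isLyndon_of_lt_rotate fun i hi0 hi => ?_⟩
  have hle : w.rotate k ≤ (w.rotate k).rotate i := by
    rw [rotate_rotate, ← rotate_mod w (k + i)]
    exact hmin _ (Finset.mem_range.2 (Nat.mod_lt _ hlen))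
  refine hle.lt_of_ne fun heq => ?_
  exact hi0.ne' ((hw.rotate k) i hi heq.symm)

end Lyndon

section Words

variable {n : ℕ}

def rotateFn (k : ℕ) (w : Fin n → α) : Fin n → α :=
  fun i => w ⟨(i + k) % n, Nat.mod_lt _ i.pos⟩

theorem ofFn_rotateFn (k : ℕ) (w : Fin n → α) : ofFn (rotateFn k w) = (ofFn w).rotate k := by
  apply ext_get (by simp)
  intro i _ _
  simp [rotateFn]

theorem apply_eq_apply_mod_of_rotateFn_eq_self {w : Fin n → α} {g : ℕ} (hg : 0 < g)
    (hw : rotateFn g w = w) (i : Fin n) : w i = w ⟨i % g, (Nat.mod_le _ _).trans_lt i.2⟩ := by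
  obtain ⟨i, hi⟩ := i
  induction i using Nat.strong_induction_on with
  | _ i ih =>
    rcases Nat.lt_or_ge i g with hig | hig
    · simp only [Nat.mod_eq_of_lt hig]
    · have hshift := congrFun hw ⟨i - g, by omega⟩
      simp only [rotateFn, Nat.sub_add_cancel hig, Nat.mod_eq_of_lt hi] at hshift
      rw [hshift, ih (i - g) (by omega) (by omega)]
      simp only [← Nat.mod_eq_sub_mod hig]

theorem card_rotateFn_eq_self_le [Fintype α] {g : ℕ} (hg : 0 < g) (hgn : g ≤ n) :
    #{w : Fin n → α | rotateFn g w = w} ≤ Fintype.card α ^ g := by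
  calc _ ≤ #(Finset.univ : Finset (Fin g → α)) := by
        refine Finset.card_le_card_of_injOn (fun w i => w (Fin.castLE hgn i)) (by simp) ?_
        intro w hw w' hw' heq
        simp only [Finset.coe_filter, Finset.mem_univ, true_and, Set.mem_ofPred_eq] at hw hw'
        funext i
        rw [apply_eq_apply_mod_of_rotateFn_eq_self hg hw i,
          apply_eq_apply_mod_of_rotateFn_eq_self hg hw' i]
        exact congrFun heq ⟨i % g, Nat.mod_lt _ hg⟩
    _ = _ := by simp

theorem card_not_isPrimitive_lt [Fintype α] (hα : 2 ≤ Fintype.card α) (hn : 0 < n) :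
    #{w : Fin n → α | ¬ IsPrimitive (ofFn w)} < Fintype.card α ^ (n / 2 + 1) := by
  have hsub : ({w | ¬ IsPrimitive (ofFn w)} : Finset (Fin n → α)) ⊆
      (Finset.Icc 1 (n / 2)).biUnion fun g => {w | rotateFn g w = w} := by
    intro w hw
    simp only [Finset.mem_filter, Finset.mem_univ, true_and] at hw
    obtain ⟨g, hg0, hgn, hrot⟩ := exists_rotate_eq_self_of_not_isPrimitive (by simp; omega) hw
    simp only [length_ofFn] at hgn
    simp only [Finset.mem_biUnion, Finset.mem_Icc, Finset.mem_filter, Finset.mem_univ, true_and]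
    exact ⟨g, ⟨hg0, hgn⟩, ofFn_injective (by rw [ofFn_rotateFn, hrot])⟩
  calc _ ≤ _ := Finset.card_le_card hsub
    _ ≤ ∑ g ∈ Finset.Icc 1 (n / 2), Fintype.card α ^ g :=
        Finset.card_biUnion_le.trans <| Finset.sum_le_sum fun g hg =>
          card_rotateFn_eq_self_le (Finset.mem_Icc.1 hg).1
            ((Finset.mem_Icc.1 hg).2.trans (Nat.div_le_self _ _))
    _ < _ := Nat.geomSum_lt hα fun g hg => by simp only [Finset.mem_Icc] at hg; omega

end Words

section LyndonWords

variable {q n : ℕ}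

theorem card_rhoPreimage {A : Finset (Fin n → Fin q)} (hA : A ⊆ lyndonWords q n) :
    #(rhoPreimage A) = n * #A := by
  suffices #(A ×ˢ Finset.range n) = #(rhoPreimage A) by
    rw [← this, Finset.card_product, Finset.card_range, mul_comm]
  refine Finset.card_bij (fun p _ => rotateFn p.2 p.1) ?_ ?_ ?_
  · rintro ⟨v, k⟩ hp
    simp only [Finset.mem_product, Finset.mem_range] at hp
    have hv : IsLyndon (ofFn v) := (Finset.mem_filter.1 (hA hp.1)).2
    obtain ⟨k', hk', hback⟩ := exists_rotate_rotate_eq (l := ofFn v) (by simp; omega) k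
    simp only [rhoPreimage, Finset.mem_filter, ofFn_rotateFn]
    exact ⟨Finset.mem_univ _, hv.isPrimitive.rotate k, v, hp.1, k', by simpa using hk', hback⟩
  · rintro ⟨v, k⟩ hp ⟨v', k'⟩ hp' heq
    simp only [Finset.mem_product, Finset.mem_range] at hp hp'
    obtain ⟨hvv', rfl⟩ := IsLyndon.eq_of_rotate_eq_rotate (Finset.mem_filter.1 (hA hp.1)).2
      (Finset.mem_filter.1 (hA hp'.1)).2 (by simp) (by simpa using hp.2) (by simpa using hp'.2)
      (by simpa only [ofFn_rotateFn] using congrArg ofFn heq)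
    rw [ofFn_injective hvv']
  · intro w hw
    simp only [rhoPreimage, Finset.mem_filter] at hw
    obtain ⟨-, -, v, hv, k, hk, hrot⟩ := hw
    obtain ⟨k', hk', hback⟩ := exists_rotate_rotate_eq (l := ofFn w) (by simp; omega) k
    refine ⟨(v, k'), Finset.mem_product.2 ⟨hv, Finset.mem_range.2 (by simpa using hk')⟩,
      ofFn_injective ?_⟩
    rw [ofFn_rotateFn, ← hrot, hback]

theorem rhoPreimage_lyndonWords (hn : 0 < n) :
    rhoPreimage (lyndonWords q n) = ({w | IsPrimitive (ofFn w)} : Finset (Fin n → Fin q)) := by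
  ext w
  simp only [rhoPreimage, lyndonWords, Finset.mem_filter, Finset.mem_univ, true_and,
    and_iff_left_iff_imp]
  intro hw
  obtain ⟨k, hk, hlyn⟩ := exists_isLyndon_rotate hw (by simp; omega)
  exact ⟨rotateFn k w, by rwa [ofFn_rotateFn], k, by simpa using hk, (ofFn_rotateFn k w).symm⟩

theorem card_lyndonWords_mul_add_card_not_isPrimitive (hn : 0 < n) :
    n * #(lyndonWords q n) + #({w | ¬ IsPrimitive (ofFn w)} : Finset (Fin n → Fin q)) =
      q ^ n := by
  rw [← card_rhoPreimage subset_rfl, rhoPreimage_lyndonWords hn,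
    Finset.card_filter_add_card_filter_not]
  simp

end LyndonWords

theorem abs_div_sub_mul_div_le {a L N m Q : ℝ} (ha : 0 ≤ a) (haL : a ≤ L) (hN : 0 ≤ N)
    (hQ : Q = m * L + N) (hQpos : 0 < Q) : |a / L - m * a / Q| ≤ N / Q := by
  rcases (ha.trans haL).eq_or_lt with hL | hL
  · obtain rfl : a = 0 := le_antisymm (hL ▸ haL) ha
    simpa using div_nonneg hN hQpos.le
  have hdiff : a / L - m * a / Q = a / L * (N / Q) := by
    rw [div_sub_div _ _ hL.ne' hQpos.ne', div_mul_div_comm, hQ]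
    ring
  rw [hdiff, abs_of_nonneg (by positivity)]
  exact mul_le_of_le_one_left (by positivity) ((div_le_one hL).2 haL)

theorem pow_div_two_succ_div_pow_le {x : ℝ} (hx : 1 ≤ x) (n : ℕ) :
    x ^ (n / 2 + 1) / x ^ n ≤ x * x ^ (-(n : ℝ) / 2) := by
  have hx0 : 0 < x := one_pos.trans_le hx
  calc x ^ (n / 2 + 1) / x ^ n = x ^ (((n / 2 + 1 : ℕ) : ℝ) - n) := by
        rw [Real.rpow_sub hx0, Real.rpow_natCast, Real.rpow_natCast]
    _ ≤ x ^ (1 + -(n : ℝ) / 2) := by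
        refine Real.rpow_le_rpow_of_exponent_le hx ?_
        push_cast
        linarith [Nat.cast_div_le (α := ℝ) (m := n) (n := 2)]
    _ = x * x ^ (-(n : ℝ) / 2) := by rw [Real.rpow_add hx0, Real.rpow_one]

theorem stmt_8 (q : ℕ) (hq : 2 ≤ q) :
    ∃ C : ℝ, 0 < C ∧ ∀ n : ℕ, 1 ≤ n →
      ∀ A : Finset (Fin n → Fin q), A ⊆ lyndonWords q n →
        |(A.card : ℝ) / ((lyndonWords q n).card : ℝ)
            - ((rhoPreimage A).card : ℝ) / (q : ℝ) ^ n|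
          ≤ C * (q : ℝ) ^ (-(n : ℝ) / 2) := by
  refine ⟨q, by positivity, fun n hn A hA => ?_⟩
  set N := #({w | ¬ IsPrimitive (ofFn w)} : Finset (Fin n → Fin q))
  have hsplit : (q : ℝ) ^ n = n * #(lyndonWords q n) + N := by
    exact_mod_cast (card_lyndonWords_mul_add_card_not_isPrimitive hn).symm
  have hN : (N : ℝ) ≤ (q : ℝ) ^ (n / 2 + 1) := by
    have h := card_not_isPrimitive_lt (α := Fin q) (by simpa using hq) hn
    rw [Fintype.card_fin] at h
    exact_mod_cast h.le
  rw [card_rhoPreimage hA, Nat.cast_mul]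
  calc _ ≤ (N : ℝ) / (q : ℝ) ^ n :=
        abs_div_sub_mul_div_le (by positivity) (by exact_mod_cast Finset.card_le_card hA)
          (by positivity) hsplit (by positivity)
    _ ≤ (q : ℝ) ^ (n / 2 + 1) / (q : ℝ) ^ n := by gcongr
    _ ≤ _ := pow_div_two_succ_div_pow_le (by exact_mod_cast hq.trans' one_le_two) n
end

section
/- Consider the alphabet {a, b} with a < b, and for each n let P̃_n be the uniform probability on the set of Lyndon words of length n, and N_n the number of runs. For every γ > 0 there exists a constant C_γ > 0 such that for every ε > 0, P̃_n(|N_n − n/2| ≥ γ·n^{1/2+ε}) = O(exp(−C_γ·n^{2ε})) as n → ∞; that is, there exist K > 0 and n_0 such that for all n ≥ n_0, P̃_n(|N_n − n/2| ≥ γ·n^{1/2+ε}) ≤ K·exp(−C_γ·n^{2ε}). -/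
open scoped Classical

/-- The number of runs (maximal blocks of consecutive equal letters) of a word. -/
def numRuns {α : Type*} [DecidableEq α] (l : List α) : ℕ :=
  (l.destutter (· ≠ ·)).length

/-!
A binary word of length `m + 1` is determined by its first letter and the set of positions where
it changes letter, and its number of runs is one more than the size of that set. Hence the words
whose number of runs is at distance `≥ t` from `n / 2` number at most twice a binomial tail, which
the exponential moment `∑ₛ exp (l (#s - m / 2)) = (2 cosh (l / 2)) ^ m ≤ 2 ^ m exp (m l² / 8)`
bounds by `4 · 2 ^ m · exp (-t² / (2 m))`.

Lyndon words, on the other hand, are a fraction at least `1 / (32 n)` of all words: with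
`k = log₂ n + 2`, a word `0^k 1 ⋯ 1` without any further block `0^k` is Lyndon, and a union bound
over the `≤ n` possible blocks shows that at least half of the `2 ^ (n - k - 2)` words `0^k 1 ⋯ 1`
qualify. The polynomial loss `32 n` is absorbed into `exp (-γ² n^{2ε} / 4)`.
-/

open Finset Real

section Runs

variable {α : Type*} [DecidableEq α]

def changeSet {m : ℕ} (w : Fin (m + 1) → α) : Finset (Fin m) :=
  univ.filter fun i => w i.castSucc ≠ w i.succ

lemma numRuns_cons_cons (a b : α) (l : List α) :
    numRuns (a :: b :: l) = (if a = b then 0 else 1) + numRuns (b :: l) := by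
  by_cases h : a = b
  · subst h; simp [numRuns, List.destutter_cons']
  · simp [numRuns, h, List.destutter_cons']
    omega

lemma card_changeSet_succ {m : ℕ} (w : Fin (m + 1 + 1) → α) :
    #(changeSet w) = (if w 0 = w 1 then 0 else 1) + #(changeSet fun i => w i.succ) := by
  simp only [changeSet, card_filter, Fin.sum_univ_succ]
  grind [Fin.castSucc_zero, Fin.succ_zero_eq_one, Fin.succ_castSucc]

lemma numRuns_ofFn : ∀ {m : ℕ} (w : Fin (m + 1) → α),
    numRuns (List.ofFn w) = #(changeSet w) + 1
  | 0, w => by simp [numRuns, changeSet]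
  | m + 1, w => by
    have ih := numRuns_ofFn fun i : Fin (m + 1) => w i.succ
    rw [List.ofFn_succ, Fin.succ_zero_eq_one] at ih
    rw [List.ofFn_succ, List.ofFn_succ, numRuns_cons_cons]
    simp only [Fin.succ_zero_eq_one]
    rw [ih, card_changeSet_succ]
    by_cases h : w 0 = w 1 <;> simp [h, add_assoc]

end Runs

lemma eq_of_changeSet_eq {m : ℕ} {w w' : Fin (m + 1) → Fin 2} (h₀ : w 0 = w' 0)
    (h : changeSet w = changeSet w') : w = w' := by
  funext j
  induction j using Fin.induction with
  | zero => exact h₀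
  | succ i ih =>
    have hi : w i.castSucc ≠ w i.succ ↔ w' i.castSucc ≠ w' i.succ := by
      simpa [changeSet] using congrArg (i ∈ ·) h
    omega

lemma card_filter_numRuns_le {m : ℕ} (P : ℕ → Prop) [DecidablePred P] :
    #{w : Fin (m + 1) → Fin 2 | P (numRuns (List.ofFn w))}
      ≤ 2 * #{s : Finset (Fin m) | P (#s + 1)} := by
  calc #{w : Fin (m + 1) → Fin 2 | P (numRuns (List.ofFn w))}
      ≤ #((univ : Finset (Fin 2)) ×ˢ univ.filter fun s : Finset (Fin m) => P (#s + 1)) := by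
        refine card_le_card_of_injOn (fun w => (w 0, changeSet w)) (fun w hw => ?_)
          (fun w _ w' _ hww' => eq_of_changeSet_eq (Prod.ext_iff.1 hww').1 (Prod.ext_iff.1 hww').2)
        simp only [coe_filter, Set.mem_ofPred_eq, mem_coe, mem_product, mem_filter, mem_univ,
          true_and] at hw ⊢
        rwa [← numRuns_ofFn]
    _ = 2 * #{s : Finset (Fin m) | P (#s + 1)} := by simp

section Hoeffding

variable {ι : Type*} [Fintype ι]

lemma sum_exp_mul_card_sub_half_le (l : ℝ) :
    ∑ s : Finset ι, exp (l * (#s - Fintype.card ι / 2))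
      ≤ 2 ^ Fintype.card ι * exp (Fintype.card ι * l ^ 2 / 8) := by
  set m := Fintype.card ι
  have hterm : ∀ s : Finset ι,
      exp (l * (#s - m / 2)) = exp (l / 2) ^ #s * exp (-(l / 2)) ^ (m - #s) := by
    intro s
    have hs : #s ≤ m := card_le_univ s
    rw [← exp_nat_mul, ← exp_nat_mul, ← exp_add, Nat.cast_sub hs]
    ring_nf
  calc ∑ s : Finset ι, exp (l * (#s - m / 2))
      = (2 * cosh (l / 2)) ^ m := by
        rw [Finset.sum_congr rfl fun s _ => hterm s, Fintype.sum_pow_mul_eq_add_pow,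
          cosh_eq]
        ring
    _ ≤ (2 * exp (l ^ 2 / 8)) ^ m := by
        gcongr
        calc cosh (l / 2) ≤ exp ((l / 2) ^ 2 / 2) := cosh_le_exp_half_sq _
          _ = exp (l ^ 2 / 8) := by ring_nf
    _ = 2 ^ m * exp (m * l ^ 2 / 8) := by
        rw [mul_pow, ← exp_nat_mul]
        ring_nf

lemma card_filter_far_from_half_le (r : ℝ) (hr : 0 ≤ r) :
    (#{s : Finset ι | r ≤ |(#s : ℝ) - Fintype.card ι / 2|} : ℝ)
      ≤ 2 * 2 ^ Fintype.card ι * exp (-2 * r ^ 2 / Fintype.card ι) := by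
  set m := Fintype.card ι
  set l : ℝ := 4 * r / m
  have hl : 0 ≤ l := by positivity
  have hmarkov : ∀ x : ℝ, r ≤ |x| → 1 ≤ exp (-(l * r)) * (exp (l * x) + exp (-l * x)) := by
    intro x hx
    calc 1 ≤ exp (l * (|x| - r)) := one_le_exp (mul_nonneg hl (sub_nonneg.2 hx))
      _ ≤ exp (-(l * r) + l * x) + exp (-(l * r) + -l * x) := by
        rcases abs_choice x with h | h <;> rw [h]
        · exact le_add_of_le_of_nonneg (le_of_eq (by ring_nf)) (exp_pos _).le
        · exact le_add_of_nonneg_of_le (exp_pos _).le (le_of_eq (by ring_nf))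
      _ = exp (-(l * r)) * (exp (l * x) + exp (-l * x)) := by rw [mul_add, exp_add, exp_add]
  have hexponent : -(l * r) + m * l ^ 2 / 8 = -2 * r ^ 2 / m := by
    rcases eq_or_ne (m : ℝ) 0 with hm | hm
    · simp [l, hm]
    · simp only [l]; field_simp; ring
  calc (#{s : Finset ι | r ≤ |(#s : ℝ) - m / 2|} : ℝ)
      = ∑ s : Finset ι with r ≤ |(#s : ℝ) - m / 2|, 1 := by simp
    _ ≤ ∑ s : Finset ι with r ≤ |(#s : ℝ) - m / 2|,
          exp (-(l * r)) * (exp (l * (#s - m / 2)) + exp (-l * (#s - m / 2))) :=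
        sum_le_sum fun s hs => hmarkov _ (mem_filter.1 hs).2
    _ ≤ ∑ s : Finset ι, exp (-(l * r)) * (exp (l * (#s - m / 2)) + exp (-l * (#s - m / 2))) :=
        sum_le_sum_of_subset_of_nonneg (filter_subset _ _) fun _ _ _ => by positivity
    _ = exp (-(l * r)) * (∑ s : Finset ι, exp (l * (#s - m / 2))
          + ∑ s : Finset ι, exp (-l * (#s - m / 2))) := by
        rw [← sum_add_distrib, mul_sum]
    _ ≤ exp (-(l * r)) * (2 ^ m * exp (m * l ^ 2 / 8) + 2 ^ m * exp (m * (-l) ^ 2 / 8)) := by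
        gcongr
        · exact sum_exp_mul_card_sub_half_le l
        · exact sum_exp_mul_card_sub_half_le (-l)
    _ = 2 * 2 ^ m * exp (-2 * r ^ 2 / m) := by
        rw [← hexponent, exp_add]
        ring_nf

end Hoeffding

/-- Each proper suffix of `l` meets a letter above `a` before `l` itself does. -/
lemma isLyndon_of_window {α : Type*} [LinearOrder α] {l : List α} {a : α} {k : ℕ}
    (ha : ∀ x ∈ l, a ≤ x) (hprefix : ∀ i (hi : i < l.length), i < k → l[i] = a)
    (hwindow : ∀ i, 0 < i → i < l.length →
      ∃ j, ∃ hj : j < l.length, i ≤ j ∧ j < i + k ∧ l[j] ≠ a) :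
    IsLyndon l := by
  intro i hi hil
  obtain ⟨j, hj, hij, hjk, hja⟩ := hwindow i hi hil
  have hji : ∃ hd : i + (j - i) < l.length, l[i + (j - i)] ≠ a :=
    ⟨by omega, by simpa [Nat.add_sub_cancel' hij] using hja⟩
  have hex : ∃ d, ∃ hd : i + d < l.length, l[i + d] ≠ a := ⟨_, hji⟩
  obtain ⟨hd, hda⟩ := Nat.find_spec hex
  have hdk : Nat.find hex < k := (Nat.find_min' hex hji).trans_lt (by omega)
  refine List.lt_iff_exists.2
    (Or.inr ⟨Nat.find hex, by omega, by rw [List.length_drop]; omega, ?_, ?_⟩)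
  · intro t ht
    have hta : l[i + t] = a := by
      by_contra h
      exact Nat.find_min hex ht ⟨by omega, h⟩
    simp [hprefix t (by omega) (by omega), hta]
  · simpa [hprefix _ (by omega) hdk] using lt_of_le_of_ne (ha _ (List.getElem_mem _)) (Ne.symm hda)

lemma card_filter_forall_mem_eq {ι α : Type*} [Fintype ι] [DecidableEq ι] [Fintype α]
    [DecidableEq α] (S : Finset ι) (f : ι → α) :
    #{w : ι → α | ∀ i ∈ S, w i = f i} = Fintype.card α ^ (Fintype.card ι - #S) := by
  have h : ({w : ι → α | ∀ i ∈ S, w i = f i} : Finset _)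
      = Fintype.piFinset fun i => if i ∈ S then {f i} else univ := by
    ext w
    simp only [mem_filter, mem_univ, true_and, Fintype.mem_piFinset]
    exact forall_congr' fun i => by split_ifs with hi <;> simp [hi]
  rw [h, Fintype.card_piFinset]
  simp [apply_ite, prod_ite, filter_notMem_eq_sdiff, card_univ_sdiff]

section LyndonCount

variable {n k : ℕ}

/-- Binary words of length `n` of the shape `0^k 1 ⋯ 1`. -/
def prefixPinned (n k : ℕ) : Finset (Fin n → Fin 2) :=
  {w | ∀ j : Fin n, ((j : ℕ) < k → w j = 0) ∧ ((j : ℕ) = k ∨ (j : ℕ) = n - 1 → w j = 1)}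

def zeroWindow (n k i : ℕ) : Finset (Fin n → Fin 2) :=
  (prefixPinned n k).filter fun w => ∀ j : Fin n, i ≤ j → (j : ℕ) < i + k → w j = 0

lemma card_prefixPinned (hkn : k + 2 ≤ n) : #(prefixPinned n k) = 2 ^ (n - (k + 2)) := by
  have hS : ∀ m ∈ insert (n - 1) (range (k + 1)), m < n := by
    intro m hm; simp only [mem_insert, mem_range] at hm; omega
  have hcard : #(insert (n - 1) (range (k + 1))) = k + 2 := by
    rw [card_insert_of_notMem (by simp; omega), card_range]
  have h : prefixPinned n k = ({w | ∀ j ∈ (insert (n - 1) (range (k + 1))).attachFin hS,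
      w j = if (j : ℕ) < k then 0 else 1} : Finset (Fin n → Fin 2)) := by
    ext w
    simp only [prefixPinned, mem_filter, mem_univ, true_and, mem_attachFin, mem_insert, mem_range]
    refine forall_congr' fun j => ?_
    constructor
    · rintro ⟨h0, h1⟩ hj
      split_ifs with hjk
      · exact h0 hjk
      · exact h1 (by omega)
    · intro h
      constructor
      · intro hjk; simpa [hjk] using h (by omega)
      · intro hj; simpa [show ¬ (j : ℕ) < k by omega] using h (by omega)
  rw [h]
  -- `convert` reconciles the `Fin`-specific decidability instance of `∀ j ∈ _` with the generic one
  convert card_filter_forall_mem_eq _ (fun j : Fin n => if (j : ℕ) < k then (0 : Fin 2) else 1)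
    <;> simp [hcard]

lemma card_zeroWindow_le {i : ℕ} (hki : k < i) (hin : i + k < n) :
    #(zeroWindow n k i) ≤ 2 ^ (n - (2 * k + 2)) := by
  set T := insert (n - 1) (range (k + 1) ∪ Ico i (i + k))
  have hT : ∀ m ∈ T, m < n := by
    intro m hm; simp only [T, mem_insert, mem_union, mem_range, mem_Ico] at hm; omega
  have hcard : #T = 2 * k + 2 := by
    rw [card_insert_of_notMem (by simp; omega), card_union_of_disjoint, card_range, Nat.card_Ico]
    · omega
    · exact disjoint_left.2 fun m hm hm' => by simp only [mem_range, mem_Ico] at hm hm'; omega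
  have hsub : zeroWindow n k i ⊆ ({w | ∀ j ∈ T.attachFin hT,
      w j = if (j : ℕ) < k ∨ i ≤ j ∧ (j : ℕ) < i + k then 0 else 1} : Finset (Fin n → Fin 2)) := by
    intro w hw
    simp only [zeroWindow, prefixPinned, mem_filter, mem_univ, true_and] at hw
    simp only [mem_filter, mem_univ, true_and, mem_attachFin, T, mem_insert, mem_union, mem_range,
      mem_Ico]
    intro j hj
    split_ifs with hjw
    · rcases hjw with hjk | hjw
      · exact (hw.1 j).1 hjk
      · exact hw.2 j hjw.1 hjw.2
    · exact (hw.1 j).2 (by omega)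
  calc #(zeroWindow n k i) ≤ _ := card_le_card hsub
    _ = 2 ^ (n - (2 * k + 2)) := by
      convert card_filter_forall_mem_eq _ (fun j : Fin n =>
        if (j : ℕ) < k ∨ i ≤ j ∧ (j : ℕ) < i + k then (0 : Fin 2) else 1) <;> simp [hcard]

lemma prefixPinned_sdiff_subset_lyndonWords (hkn : k < n) :
    prefixPinned n k \ (Icc (k + 1) (n - 1 - k)).biUnion (zeroWindow n k) ⊆ lyndonWords 2 n := by
  intro w hw
  simp only [mem_sdiff, mem_biUnion, mem_Icc, not_exists, not_and, zeroWindow, mem_filter,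
    prefixPinned, mem_univ, true_and] at hw
  obtain ⟨hpin, hwin⟩ := hw
  refine mem_filter.2 ⟨mem_univ _, isLyndon_of_window (a := 0) (k := k)
    (fun x _ => Fin.zero_le x) (fun j hj hjk => by simpa using (hpin ⟨j, by simpa using hj⟩).1 hjk)
    (fun i hi hin => ?_)⟩
  rw [List.length_ofFn] at hin
  by_cases hik : i ≤ k
  · exact ⟨k, by simp; omega, hik, by omega, by simp [(hpin ⟨k, by omega⟩).2 (Or.inl rfl)]⟩
  by_cases hin' : n - 1 - k < i
  · exact ⟨n - 1, by simp; omega, by omega, by omega,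
      by simp [(hpin ⟨n - 1, by omega⟩).2 (Or.inr rfl)]⟩
  obtain ⟨j, hij, hjk, hj⟩ : ∃ j : Fin n, i ≤ j ∧ (j : ℕ) < i + k ∧ w j ≠ 0 := by
    simpa using hwin i ⟨by omega, by omega⟩ hpin
  exact ⟨j, by simp, hij, hjk, by simpa using hj⟩

lemma two_pow_le_card_lyndonWords (hkn : 2 * k + 2 ≤ n) (hn : n ≤ 2 ^ (k - 1)) :
    2 ^ (n - (k + 3)) ≤ #(lyndonWords 2 n) := by
  have hk : 1 ≤ k := by
    rcases k with _ | k
    · simp at hn; omega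
    · omega
  have hwindows : #((Icc (k + 1) (n - 1 - k)).biUnion (zeroWindow n k)) ≤ 2 ^ (n - (k + 3)) :=
    calc #((Icc (k + 1) (n - 1 - k)).biUnion (zeroWindow n k))
        ≤ ∑ i ∈ Icc (k + 1) (n - 1 - k), #(zeroWindow n k i) := card_biUnion_le
      _ ≤ ∑ _i ∈ Icc (k + 1) (n - 1 - k), 2 ^ (n - (2 * k + 2)) :=
          sum_le_sum fun i hi => card_zeroWindow_le (by simp at hi; omega) (by simp at hi; omega)
      _ ≤ n * 2 ^ (n - (2 * k + 2)) := by
          rw [sum_const, smul_eq_mul, Nat.card_Icc]; gcongr; omega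
      _ ≤ 2 ^ (k - 1) * 2 ^ (n - (2 * k + 2)) := by gcongr
      _ = 2 ^ (n - (k + 3)) := by rw [← pow_add]; congr 1; omega
  have hpinned : #(prefixPinned n k) = 2 ^ (n - (k + 3)) + 2 ^ (n - (k + 3)) := by
    rw [card_prefixPinned (by omega), show n - (k + 2) = n - (k + 3) + 1 by omega, pow_succ]
    ring
  calc 2 ^ (n - (k + 3))
      ≤ #(prefixPinned n k \ (Icc (k + 1) (n - 1 - k)).biUnion (zeroWindow n k)) := by
        have := card_le_card_sdiff_add_card (s := prefixPinned n k)
          (t := (Icc (k + 1) (n - 1 - k)).biUnion (zeroWindow n k))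
        omega
    _ ≤ #(lyndonWords 2 n) := card_le_card (prefixPinned_sdiff_subset_lyndonWords (by omega))

end LyndonCount

lemma two_pow_le_mul_card_lyndonWords {n : ℕ} (hn : 64 ≤ n) :
    2 ^ n ≤ 32 * n * #(lyndonWords 2 n) := by
  set l := Nat.log 2 n
  have hl : 6 ≤ l := Nat.le_log_of_pow_le (by norm_num) (by norm_num; omega)
  have hpow : 2 ^ l ≤ n := Nat.pow_log_le_self 2 (by omega)
  have hlog : 2 * l + 6 ≤ n := by
    have h4 : 2 ^ l = 4 * 2 ^ (l - 2) := by
      rw [← pow_sub_mul_pow 2 (show 2 ≤ l by omega)]; ring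
    have := Nat.lt_two_pow_self (n := l - 2)
    omega
  have hL := two_pow_le_card_lyndonWords (n := n) (k := l + 2) (by omega)
    (Nat.lt_pow_succ_log_self (by norm_num) n).le
  calc 2 ^ n = 2 ^ (n - (l + 2 + 3)) * (32 * 2 ^ l) := by
        rw [show 32 * 2 ^ l = 2 ^ (l + 5) by ring, ← pow_add]; congr 1; omega
    _ ≤ #(lyndonWords 2 n) * (32 * n) := by gcongr
    _ = 32 * n * #(lyndonWords 2 n) := by ring

lemma card_filter_numRuns_far_le {n : ℕ} (hn : 2 ≤ n) {t : ℝ} (ht : 1 ≤ t) :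
    (#{w : Fin n → Fin 2 | t ≤ |(numRuns (List.ofFn w) : ℝ) - n / 2|} : ℝ)
      ≤ 2 * 2 ^ n * exp (-t ^ 2 / (2 * n)) := by
  obtain ⟨m, rfl⟩ : ∃ m, n = m + 1 := ⟨n - 1, by omega⟩
  have hm : (0 : ℝ) < m := by norm_cast; omega
  have hshift : ∀ s : Finset (Fin m), t ≤ |((#s + 1 : ℕ) : ℝ) - ((m + 1 : ℕ) : ℝ) / 2| →
      t / 2 ≤ |(#s : ℝ) - Fintype.card (Fin m) / 2| := by
    intro s hs
    rw [Fintype.card_fin]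
    push_cast at hs
    rw [le_abs'] at hs ⊢
    rcases hs with hs | hs
    · left; linarith
    · right; linarith
  have hexp : -2 * (t / 2) ^ 2 / m ≤ -t ^ 2 / (2 * ((m + 1 : ℕ) : ℝ)) := by
    rw [div_le_div_iff₀ hm (by positivity)]
    push_cast
    nlinarith [sq_nonneg t]
  calc (#{w : Fin (m + 1) → Fin 2 | t ≤ |(numRuns (List.ofFn w) : ℝ) - ((m + 1 : ℕ) : ℝ) / 2|} : ℝ)
      ≤ 2 * #{s : Finset (Fin m) | t ≤ |((#s + 1 : ℕ) : ℝ) - ((m + 1 : ℕ) : ℝ) / 2|} := by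
        exact_mod_cast card_filter_numRuns_le (fun r : ℕ => t ≤ |(r : ℝ) - ((m + 1 : ℕ) : ℝ) / 2|)
    _ ≤ 2 * #{s : Finset (Fin m) | t / 2 ≤ |(#s : ℝ) - Fintype.card (Fin m) / 2|} := by
        gcongr 2 * (#?_ : ℝ)
        exact monotone_filter_right _ fun s _ hs => hshift s hs
    _ ≤ 2 * (2 * 2 ^ m * exp (-2 * (t / 2) ^ 2 / m)) := by
        gcongr
        simpa using card_filter_far_from_half_le (ι := Fin m) (t / 2) (by linarith)
    _ = 2 * 2 ^ (m + 1) * exp (-2 * (t / 2) ^ 2 / m) := by ring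
    _ ≤ 2 * 2 ^ (m + 1) * exp (-t ^ 2 / (2 * ((m + 1 : ℕ) : ℝ))) :=
        mul_le_mul_of_nonneg_left (exp_le_exp.2 hexp) (by positivity)

lemma card_filter_lyndonWords_far_div_le {n : ℕ} (hn : 64 ≤ n) {t : ℝ} (ht : 1 ≤ t) :
    (#((lyndonWords 2 n).filter fun w => t ≤ |(numRuns (List.ofFn w) : ℝ) - n / 2|) : ℝ)
        / #(lyndonWords 2 n)
      ≤ 64 * n * exp (-t ^ 2 / (2 * n)) := by
  have hL := two_pow_le_mul_card_lyndonWords hn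
  have hLpos : 0 < #(lyndonWords 2 n) := Nat.pos_of_ne_zero fun h => by simp [h] at hL
  rw [div_le_iff₀ (by exact_mod_cast hLpos)]
  calc (#((lyndonWords 2 n).filter fun w => t ≤ |(numRuns (List.ofFn w) : ℝ) - n / 2|) : ℝ)
      ≤ #{w : Fin n → Fin 2 | t ≤ |(numRuns (List.ofFn w) : ℝ) - n / 2|} := by
        exact_mod_cast card_le_card (filter_subset_filter _ (filter_subset _ _))
    _ ≤ 2 * 2 ^ n * exp (-t ^ 2 / (2 * n)) := card_filter_numRuns_far_le (by omega) ht
    _ ≤ 2 * (32 * n * #(lyndonWords 2 n)) * exp (-t ^ 2 / (2 * n)) := by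
        gcongr; exact_mod_cast hL
    _ = 64 * n * exp (-t ^ 2 / (2 * n)) * #(lyndonWords 2 n) := by ring

lemma sq_mul_rpow_half_add_div {x : ℝ} (hx : 0 < x) (γ ε : ℝ) :
    -(γ * x ^ ((1 : ℝ) / 2 + ε)) ^ 2 / (2 * x) = -(γ ^ 2 / 2 * x ^ (2 * ε)) := by
  have hsq : (x ^ ((1 : ℝ) / 2 + ε)) ^ 2 = x * x ^ (2 * ε) := by
    rw [← rpow_natCast, ← rpow_mul hx.le, show ((1 : ℝ) / 2 + ε) * (2 : ℕ) = 1 + 2 * ε by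
      push_cast; ring, rpow_add hx, rpow_one]
  rw [mul_pow, hsq]
  field_simp

open Filter

theorem stmt_10 (γ : ℝ) (hγ : 0 < γ) :
    ∃ C : ℝ, 0 < C ∧ ∀ ε : ℝ, 0 < ε →
      ∃ K : ℝ, 0 < K ∧ ∃ n₀ : ℕ, ∀ n : ℕ, n₀ ≤ n →
        (((lyndonWords 2 n).filter fun w =>
            γ * (n : ℝ) ^ ((1 : ℝ) / 2 + ε)
              ≤ |(numRuns (List.ofFn w) : ℝ) - n / 2|).card : ℝ)
          / ((lyndonWords 2 n).card : ℝ)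
        ≤ K * Real.exp (-C * (n : ℝ) ^ (2 * ε)) := by
  refine ⟨γ ^ 2 / 4, by positivity, fun ε hε => ⟨64, by norm_num, ?_⟩⟩
  have hlog : ∀ᶠ n : ℕ in atTop, log n ≤ γ ^ 2 / 4 * (n : ℝ) ^ (2 * ε) := by
    filter_upwards [tendsto_natCast_atTop_atTop.eventually
      ((isLittleO_log_rpow_atTop (by linarith : 0 < 2 * ε)).bound (by positivity : 0 < γ ^ 2 / 4)),
      eventually_ge_atTop 1] with n hn hn1
    have : (0 : ℝ) ≤ log n := log_nonneg (by exact_mod_cast hn1)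
    simpa [abs_of_nonneg this, abs_of_nonneg (rpow_nonneg (Nat.cast_nonneg n) _)] using hn
  have ht : ∀ᶠ n : ℕ in atTop, 1 ≤ γ * (n : ℝ) ^ ((1 : ℝ) / 2 + ε) :=
    ((tendsto_rpow_atTop (by linarith)).comp tendsto_natCast_atTop_atTop).const_mul_atTop hγ
      |>.eventually_ge_atTop 1
  obtain ⟨n₀, hn₀⟩ := eventually_atTop.1 ((eventually_ge_atTop 64).and (ht.and hlog))
  refine ⟨n₀, fun n hn => ?_⟩
  obtain ⟨h64, ht, hlog⟩ := hn₀ n hn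
  have hn : (0 : ℝ) < n := by norm_cast; omega
  calc _ ≤ 64 * n * exp (-(γ ^ 2 / 2 * n ^ (2 * ε))) :=
        sq_mul_rpow_half_add_div hn γ ε ▸ card_filter_lyndonWords_far_div_le h64 ht
    _ = 64 * exp (log n - γ ^ 2 / 2 * n ^ (2 * ε)) := by rw [exp_sub, exp_log hn, exp_neg]; ring
    _ ≤ 64 * exp (-(γ ^ 2 / 4) * n ^ (2 * ε)) := by gcongr; linarith
end

section
/- Let n ≥ 1 and m ≥ 1 be integers. For a uniformly random binary word of length n, the probability that the longest run has length at most m is at least (1 − 2^{−m})^n. -/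
open scoped Classical

/-- The length of the longest run of a word: the largest `m` such that a block of
`m` consecutive equal letters occurs in the word. -/
noncomputable def maxRun {α : Type*} (l : List α) : ℕ :=
  sSup {m | ∃ c, List.replicate m c <:+: l}

/-!
Let `a n` count the binary words of length `n` whose longest run has length at most `m`.
Appending to such a word of length `n - k` a run of `k ≤ m` copies of the letter it does not end
with gives such a word of length `n`, and different pairs `(k, word)` give different words, so
`∑_{k=1}^m a (n - k) ≤ a n` for `n > m`, while `a n = 2 ^ n` for `n ≤ m`. With
`q = 1 - 2⁻ᵐ` and `∑_{k=1}^m 2 ^ (n - k) = q 2ⁿ`, strong induction then gives `qⁿ 2ⁿ ≤ a n`.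
-/

open Finset

lemma List.ofFn_getD {α : Type*} {l : List α} {n : ℕ} (h : l.length = n) (d : α) :
    List.ofFn (fun i : Fin n => l.getD i d) = l := by
  subst h
  simp

section Runs

open List

variable {α : Type*}

lemma maxRun_le_iff {l : List α} {m : ℕ} :
    maxRun l ≤ m ↔ ∀ k c, replicate k c <:+: l → k ≤ m := by
  have hbdd : BddAbove {m | ∃ c, replicate m c <:+: l} :=
    ⟨l.length, fun k ⟨c, hc⟩ => by simpa using hc.length_le⟩
  exact ⟨fun h k c hk => (le_csSup hbdd ⟨c, hk⟩).trans h,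
    fun h => csSup_le' fun k ⟨c, hc⟩ => h k c hc⟩

lemma le_maxRun {l : List α} {k : ℕ} {c : α} (h : replicate k c <:+: l) : k ≤ maxRun l :=
  maxRun_le_iff.mp le_rfl k c h

lemma maxRun_le_length (l : List α) : maxRun l ≤ l.length :=
  maxRun_le_iff.mpr fun _ _ h => by simpa using h.length_le

lemma maxRun_append_le {u v : List α} (h : ∀ a ∈ u.getLast?, ∀ b ∈ v.head?, a ≠ b) :
    maxRun (u ++ v) ≤ max (maxRun u) (maxRun v) := by
  refine maxRun_le_iff.mpr fun k c hk => ?_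
  obtain hu | hv | ⟨s, t, hs, ht, hst, hsu, htv⟩ := infix_append_iff_ne_nil.mp hk
  · exact le_max_of_le_left (le_maxRun hu)
  · exact le_max_of_le_right (le_maxRun hv)
  · -- a constant block straddling the junction would force `u` to end, and `v` to start, with `c`
    have hc : ∀ x ∈ s ++ t, x = c := fun x hx => eq_of_mem_replicate (hst ▸ hx)
    refine absurd rfl (h c ?_ c ?_)
    · rw [getLast?_eq_some_getLast (hsu.ne_nil hs), ← hsu.getLast hs,
        hc _ (mem_append_left t (getLast_mem hs))]
      rfl
    · rw [head?_eq_some_head (htv.ne_nil ht), ← htv.head ht,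
        hc _ (mem_append_right s (head_mem ht))]
      rfl

lemma append_replicate_inj {u u' : List α} {c : α} {k k' : ℕ} (hu : u.getLast? ≠ some c)
    (hu' : u'.getLast? ≠ some c) (h : u ++ replicate k c = u' ++ replicate k' c) :
    u = u' ∧ k = k' := by
  wlog hk : k ≤ k' generalizing u u' k k'
  · exact (this hu' hu h.symm (by omega)).imp Eq.symm Eq.symm
  obtain ⟨d, rfl⟩ := Nat.exists_eq_add_of_le' hk
  rw [replicate_add, ← append_assoc] at h
  obtain rfl := append_cancel_right h
  cases d with
  | zero => simp
  | succ d => simp [getLast?_replicate] at hu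

end Runs

section Binary

open List

/-- For `w = []` the appended letter is the junk value `1`; `w` is nonempty wherever this is used. -/
def appendFlipRun (k : ℕ) (w : List (Fin 2)) : List (Fin 2) :=
  w ++ replicate k (w.getLastD 0).rev

lemma getLast?_ne_rev_getLastD {w : List (Fin 2)} (hw : w ≠ []) :
    w.getLast? ≠ some (w.getLastD 0).rev := by
  have hrev : ∀ x : Fin 2, x ≠ x.rev := by decide
  simpa [getLast?_eq_some_getLast hw] using hrev _

lemma maxRun_appendFlipRun_le {w : List (Fin 2)} {k m : ℕ} (hw : w ≠ []) (hwm : maxRun w ≤ m)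
    (hk : k ≤ m) : maxRun (appendFlipRun k w) ≤ m := by
  refine (maxRun_append_le fun a ha b hb => ?_).trans
    (max_le hwm ((maxRun_le_length _).trans (by simpa using hk)))
  rw [Option.mem_def] at ha
  obtain ⟨-, rfl⟩ : k ≠ 0 ∧ (w.getLastD 0).rev = b := by simpa [head?_replicate] using hb
  exact fun hab => getLast?_ne_rev_getLastD hw (hab ▸ ha)

lemma appendFlipRun_inj {w w' : List (Fin 2)} {k k' : ℕ} (hw : w ≠ []) (hw' : w' ≠ [])
    (hk : k ≠ 0) (hk' : k' ≠ 0) (h : appendFlipRun k w = appendFlipRun k' w') :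
    w = w' ∧ k = k' := by
  have hlast : (w.getLastD 0).rev = (w'.getLastD 0).rev := by
    simpa [appendFlipRun, getLast?_replicate, hk, hk'] using congrArg getLast? h
  rw [appendFlipRun, appendFlipRun, ← hlast] at h
  exact append_replicate_inj (getLast?_ne_rev_getLastD hw) (hlast ▸ getLast?_ne_rev_getLastD hw') h

end Binary

noncomputable def shortRunWords (m n : ℕ) : Finset (Fin n → Fin 2) :=
  {w | maxRun (List.ofFn w) ≤ m}

lemma card_shortRunWords_of_le {m n : ℕ} (h : n ≤ m) : #(shortRunWords m n) = 2 ^ n := by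
  rw [shortRunWords, filter_true_of_mem fun w _ => (maxRun_le_length _).trans (by simpa using h)]
  simp

lemma sum_card_shortRunWords_le {m n : ℕ} (hmn : m < n) :
    ∑ k ∈ Icc 1 m, #(shortRunWords m (n - k)) ≤ #(shortRunWords m n) := by
  rw [← card_sigma]
  set s := (Icc 1 m).sigma fun k => shortRunWords m (n - k)
  have mem_s : ∀ p, p ∈ s ↔ (1 ≤ p.1 ∧ p.1 ≤ m) ∧ maxRun (List.ofFn p.2) ≤ m := by
    simp [s, shortRunWords]
  have hne : ∀ p ∈ s, List.ofFn p.2 ≠ [] := by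
    intro p hp
    rw [mem_s] at hp
    rw [Ne, List.ofFn_eq_nil_iff]
    omega
  let f : (Σ k, Fin (n - k) → Fin 2) → Fin n → Fin 2 :=
    fun p i => (appendFlipRun p.1 (List.ofFn p.2)).getD i 0
  have hf : ∀ p ∈ s, List.ofFn (f p) = appendFlipRun p.1 (List.ofFn p.2) := by
    intro p hp
    have hk := ((mem_s p).mp hp).1.2
    refine List.ofFn_getD ?_ _
    rw [appendFlipRun, List.length_append, List.length_ofFn, List.length_replicate]
    omega
  refine card_le_card_of_injOn f (fun p hp => ?_) (fun p hp p' hp' h => ?_)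
  · obtain ⟨⟨-, hkm⟩, hw⟩ := (mem_s p).mp hp
    rw [mem_coe, shortRunWords, mem_filter, hf p hp]
    exact ⟨mem_univ _, maxRun_appendFlipRun_le (hne p hp) hw hkm⟩
  · obtain ⟨⟨hk, -⟩, -⟩ := (mem_s p).mp hp
    obtain ⟨⟨hk', -⟩, -⟩ := (mem_s p').mp hp'
    obtain ⟨hw, hkk'⟩ := appendFlipRun_inj (hne p hp) (hne p' hp') (by omega) (by omega)
      ((hf p hp).symm.trans ((congrArg List.ofFn h).trans (hf p' hp')))
    obtain ⟨k, w⟩ := p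
    obtain ⟨k', w'⟩ := p'
    subst hkk'
    obtain rfl := List.ofFn_injective hw
    rfl

lemma sum_Icc_two_pow_sub_eq_mul {m n : ℕ} (h : m ≤ n) :
    ∑ k ∈ Icc 1 m, (2 : ℝ) ^ (n - k) = (1 - (2 ^ m)⁻¹) * 2 ^ n := by
  induction m with
  | zero => simp
  | succ m ih =>
    rw [sum_Icc_succ_top (by omega), ih (by omega), pow_sub₀ _ two_ne_zero h]
    field_simp
    ring

lemma pow_mul_two_pow_le_of_forall_sum_le {a : ℕ → ℝ} {m : ℕ} (hbase : ∀ n ≤ m, 2 ^ n ≤ a n)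
    (hrec : ∀ n, m < n → ∑ k ∈ Icc 1 m, a (n - k) ≤ a n) (n : ℕ) :
    (1 - (2 ^ m)⁻¹ : ℝ) ^ n * 2 ^ n ≤ a n := by
  set q : ℝ := 1 - (2 ^ m)⁻¹
  have hq0 : 0 ≤ q := sub_nonneg.mpr (inv_le_one_of_one_le₀ (one_le_pow₀ one_le_two))
  have hq1 : q ≤ 1 := sub_le_self _ (by positivity)
  induction n using Nat.strong_induction_on with
  | _ n ih =>
  rcases le_or_gt n m with hn | hn
  · calc q ^ n * 2 ^ n ≤ 1 * 2 ^ n := by gcongr; exact pow_le_one₀ hq0 hq1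
      _ ≤ a n := by simpa using hbase n hn
  · calc q ^ n * 2 ^ n = q ^ (n - 1) * (q * 2 ^ n) := by
          rw [← mul_assoc, ← pow_succ, Nat.sub_add_cancel (by omega)]
      _ = ∑ k ∈ Icc 1 m, q ^ (n - 1) * 2 ^ (n - k) := by
          rw [← mul_sum, sum_Icc_two_pow_sub_eq_mul hn.le]
      _ ≤ ∑ k ∈ Icc 1 m, q ^ (n - k) * 2 ^ (n - k) := sum_le_sum fun k hk => by
          rw [mem_Icc] at hk
          exact mul_le_mul_of_nonneg_right
            (pow_le_pow_of_le_one hq0 hq1 (show n - k ≤ n - 1 by omega)) (by positivity)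
      _ ≤ ∑ k ∈ Icc 1 m, a (n - k) := sum_le_sum fun k hk => by
          rw [mem_Icc] at hk
          exact ih _ (by omega)
      _ ≤ a n := hrec n hn

theorem stmt_13_general (n m : ℕ) :
    (1 - (2 : ℝ) ^ (-(m : ℤ))) ^ n
      ≤ ((Finset.univ.filter fun w : Fin n → Fin 2 =>
            maxRun (List.ofFn w) ≤ m).card : ℝ) / 2 ^ n := by
  rw [zpow_neg, zpow_natCast, le_div_iff₀ (by positivity)]
  refine pow_mul_two_pow_le_of_forall_sum_le (a := fun n => (#(shortRunWords m n) : ℝ))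
    (fun n hn => ?_) (fun n hn => ?_) n
  · simp [card_shortRunWords_of_le hn]
  · exact_mod_cast sum_card_shortRunWords_le hn

theorem stmt_13 (n m : ℕ) (hn : 1 ≤ n) (hm : 1 ≤ m) :
    (1 - (2 : ℝ) ^ (-(m : ℤ))) ^ n
      ≤ ((Finset.univ.filter fun w : Fin n → Fin 2 =>
            maxRun (List.ofFn w) ≤ m).card : ℝ) / 2 ^ n :=
  stmt_13_general n m
end

section
/- Let w be a primitive word of length n over the alphabet {a, b}, and let ρ(w) be the unique Lyndon word in its cyclic-shift orbit. Then the length of the longest run of the letter a satisfies M_n^a(w) ≤ M_n^a(ρ(w)). -/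
/-!
Every rotation `w` of `r` is an infix of `r ++ r`, so each run of `a`s in `w` is a run of `a`s in
`r ++ r`. A Lyndon word of length at least two begins with a letter strictly smaller than its last
one, so it does not end in the minimal letter `a`; a run of `a`s therefore cannot straddle the
junction of `r ++ r` and already lies in `r`.
-/

open scoped Classical

/-- The length of the longest run of the letter c in a word. -/
noncomputable def maxRunOf {α : Type*} (c : α) (l : List α) : ℕ :=
  sSup {m | List.replicate m c <:+: l}

namespace List

variable {α : Type*}

theorem IsRotated.infix_append_self {l l' : List α} (h : l ~r l') : l <:+: l' ++ l' := by
  obtain ⟨n, rfl⟩ := h.symm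
  rw [rotate_eq_drop_append_take_mod]
  exact ⟨l'.take _, l'.drop _, by simp only [append_assoc]; rw [← append_assoc, take_append_drop]⟩

theorem replicate_infix_append_of_getLast?_ne {xs ys : List α} {c : α} {m : ℕ}
    (hlast : xs.getLast? ≠ some c) (h : replicate m c <:+: xs ++ ys) :
    replicate m c <:+: xs ∨ replicate m c <:+: ys := by
  rcases infix_append_iff_ne_nil.mp h with hxs | hys | ⟨l₁, l₂, hl₁, -, hl, hsuf, -⟩
  · exact .inl hxs
  · exact .inr hys
  · refine absurd ?_ hlast
    obtain ⟨-, hrep, -⟩ := replicate_eq_append_iff.mp hl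
    obtain ⟨s, rfl⟩ := hsuf
    rw [hrep]
    simp [getLast?_append, getLast?_replicate, hl₁]

end List

open List

lemma bddAbove_setOf_replicate_infix {α : Type*} (c : α) (l : List α) :
    BddAbove {m | replicate m c <:+: l} :=
  ⟨l.length, fun m hm => by simpa using hm.length_le⟩

lemma replicate_maxRunOf_infix {α : Type*} (c : α) (l : List α) :
    replicate (maxRunOf c l) c <:+: l :=
  Nat.sSup_mem ⟨0, by simp⟩ (bddAbove_setOf_replicate_infix c l)

lemma le_maxRunOf {α : Type*} {c : α} {l : List α} {m : ℕ}
    (h : replicate m c <:+: l) : m ≤ maxRunOf c l :=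
  le_csSup (bddAbove_setOf_replicate_infix c l) h

lemma maxRunOf_le_of_isRotated {α : Type*} {c : α} {w r : List α} (h : w ~r r)
    (hlast : r.getLast? ≠ some c) : maxRunOf c w ≤ maxRunOf c r := by
  have hrun := (replicate_maxRunOf_infix c w).trans h.infix_append_self
  exact le_maxRunOf ((replicate_infix_append_of_getLast?_ne hlast hrun).elim id id)

lemma IsLyndon.head_lt_getLast {α : Type*} [LinearOrder α] {r : List α} (hL : IsLyndon r)
    (hr : 2 ≤ r.length) :
    r.head (ne_nil_of_length_pos (by omega)) < r.getLast (ne_nil_of_length_pos (by omega)) := by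
  have hlex := hL (r.length - 1) (by omega) (by omega)
  rw [drop_length_sub_one (ne_nil_of_length_pos (by omega))] at hlex
  generalize r.getLast _ = x at hlex ⊢
  obtain _ | ⟨a, u⟩ := r
  · simp at hr
  · cases hlex with
    | rel h => exact h
    | cons h => cases h

theorem stmt_15_general (w : List (Fin 2)) (k : ℕ)
    (hL : IsLyndon (w.rotate k)) :
    maxRunOf (0 : Fin 2) w ≤ maxRunOf (0 : Fin 2) (w.rotate k) := by
  match w, hL with
  | [], _ => simp
  | [_], _ => simp
  | _ :: _ :: _, hL =>
    refine maxRunOf_le_of_isRotated (IsRotated.forall _ k).symm fun hlast => ?_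
    have hlt := hL.head_lt_getLast (by simp)
    rw [getLast?_eq_some_getLast (ne_nil_of_length_pos (by simp)), Option.some_inj] at hlast
    rw [hlast] at hlt
    exact Fin.not_lt_zero _ hlt

theorem stmt_15 (w : List (Fin 2)) (hw : IsPrimitive w) (k : ℕ) (hk : k < w.length)
    (hL : IsLyndon (w.rotate k)) :
    maxRunOf (0 : Fin 2) w ≤ maxRunOf (0 : Fin 2) (w.rotate k) :=
  stmt_15_general w k hL
end

section
/- Let w be a primitive word of length n over the alphabet {a, b}, with runs of lengths X_1(w),…,X_{N_n}(w) in order of appearance, and let ρ(w) be the unique Lyndon word in its cyclic-shift orbit. Then the longest-run lengths satisfy M_n(ρ(w)) ≤ max{ M_n(w), X_1(w) + X_{N_n}(w) }. -/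
open scoped Classical

/-- The length of the first run of a word (0 for the empty word). -/
def firstRunLen {α : Type*} [DecidableEq α] : List α → ℕ
  | [] => 0
  | (c :: rest) => ((c :: rest).takeWhile (· = c)).length

/-- The length of the last run of a word (0 for the empty word). -/
def lastRunLen {α : Type*} [DecidableEq α] (l : List α) : ℕ :=
  firstRunLen l.reverse

/-! Writing `l.rotate k = l.drop k ++ l.take k`, a run of the rotated word either lies inside
one of the two factors, and is then a block of `l` itself, or straddles the junction, where it
is a final block of `l` followed by an initial block of `l`, so its length is at most
`lastRunLen l + firstRunLen l`. -/

theorem le_firstRunLen_of_replicate_prefix {α : Type*} [DecidableEq α] {j : ℕ} {c : α}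
    {l : List α} (h : List.replicate j c <+: l) : j ≤ firstRunLen l := by
  obtain ⟨t, rfl⟩ := h
  cases j with
  | zero => exact Nat.zero_le _
  | succ j =>
    have hrun : (List.replicate (j + 1) c ++ t).takeWhile (· = c)
        = List.replicate (j + 1) c ++ t.takeWhile (· = c) :=
      List.takeWhile_append_of_pos (by simp)
    rw [List.replicate_succ, List.cons_append] at hrun ⊢
    simp only [firstRunLen, hrun, List.length_append, List.length_cons, List.length_replicate]
    omega

theorem le_lastRunLen_of_replicate_suffix {α : Type*} [DecidableEq α] {j : ℕ} {c : α}
    {l : List α} (h : List.replicate j c <:+ l) : j ≤ lastRunLen l :=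
  le_firstRunLen_of_replicate_prefix (by simpa using List.reverse_prefix.mpr h)

theorem le_maxRun_of_replicate_infix {α : Type*} {m : ℕ} {c : α} {l : List α}
    (h : List.replicate m c <:+: l) : m ≤ maxRun l :=
  le_csSup ⟨l.length, fun _ ⟨_, hd⟩ => by simpa using hd.length_le⟩ ⟨c, h⟩

theorem maxRun_le {α : Type*} {l : List α} {n : ℕ}
    (h : ∀ m c, List.replicate m c <:+: l → m ≤ n) : maxRun l ≤ n :=
  csSup_le' fun m ⟨c, hm⟩ => h m c hm

theorem replicate_infix_append_iff {α : Type*} {m : ℕ} {c : α} {xs ys : List α} :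
    List.replicate m c <:+: xs ++ ys ↔ List.replicate m c <:+: xs ∨ List.replicate m c <:+: ys ∨
      ∃ i j, i + j = m ∧ List.replicate i c <:+ xs ∧ List.replicate j c <+: ys := by
  rw [List.infix_append_iff]
  refine or_congr_right (or_congr_right ⟨?_, ?_⟩)
  · rintro ⟨l₁, l₂, hl, hl₁, hl₂⟩
    obtain ⟨hlen, h₁, h₂⟩ := List.append_eq_replicate_iff.mp hl.symm
    exact ⟨_, _, hlen, h₁ ▸ hl₁, h₂ ▸ hl₂⟩
  · rintro ⟨i, j, rfl, hi, hj⟩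
    exact ⟨_, _, List.replicate_add .., hi, hj⟩

theorem maxRun_rotate_le {α : Type*} [DecidableEq α] {l : List α} {k : ℕ} (hk : k ≤ l.length) :
    maxRun (l.rotate k) ≤ max (maxRun l) (firstRunLen l + lastRunLen l) := by
  refine maxRun_le fun m c hm => ?_
  rw [List.rotate_eq_drop_append_take hk, replicate_infix_append_iff] at hm
  rcases hm with hdrop | htake | ⟨i, j, rfl, hi, hj⟩
  · exact le_max_of_le_left (le_maxRun_of_replicate_infix (hdrop.trans (l.drop_suffix k).isInfix))
  · exact le_max_of_le_left (le_maxRun_of_replicate_infix (htake.trans (l.take_prefix k).isInfix))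
  · have hlast := le_lastRunLen_of_replicate_suffix (hi.trans (l.drop_suffix k))
    have hfirst := le_firstRunLen_of_replicate_prefix (hj.trans (l.take_prefix k))
    omega

theorem stmt_16_general (w : List (Fin 2)) (k : ℕ) (hk : k < w.length) :
    maxRun (w.rotate k) ≤ max (maxRun w) (firstRunLen w + lastRunLen w) :=
  maxRun_rotate_le hk.le

theorem stmt_16 (w : List (Fin 2)) (hw : IsPrimitive w) (k : ℕ) (hk : k < w.length)
    (hL : IsLyndon (w.rotate k)) :
    maxRun (w.rotate k) ≤ max (maxRun w) (firstRunLen w + lastRunLen w) :=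
  stmt_16_general w k hk
end
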